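/- For θ ∈ (0, π) with cos θ not equal to any Chebyshev node x_{m,N}, the Chebyshev-Lagrange basis polynomial satisfies the closed form ℓ_{n,N}(cos θ) = (1/(2N)) [ sin(N(θ - θ_{n,N}))/tan((θ - θ_{n,N})/2) + sin(N(θ + θ_{n,N}))/tan((θ + θ_{n,N})/2) ], where θ_{n,N} = (2n-1)π/(2N). -/

import Mathlib

/-!
The nodes `x_{m,N}` are the roots of the Chebyshev polynomial `T_N`, whose leading coefficient
is `2^(N-1)`, so `T_N = 2^(N-1) ∏ₘ (X - x_{m,N})` and
`ℓ_{n,N}(x) = T_N(x) / ((x - x_{n,N}) T_N'(x_{n,N}))`. With `T_N' = N U_{N-1}` this gives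
`ℓ_{n,N}(cos θ) = cos (Nθ) sin θₙ / (N (cos θ - cos θₙ) sin (Nθₙ))`. On the other side,
`cos (Nθₙ) = 0` turns `sin (N(θ ∓ θₙ))` into `∓ cos (Nθ) sin (Nθₙ)`, the difference of the two
half-angle cotangents is `2 sin θₙ / (cos θ - cos θₙ)`, and `sin² (Nθₙ) = 1` closes the gap.
-/

open Real Finset

noncomputable def chebNode (N n : ℕ) : ℝ := Real.cos ((2 * (n : ℝ) - 1) * Real.pi / (2 * N))

noncomputable def chebLagrange (N n : ℕ) (x : ℝ) : ℝ :=
  ∏ m ∈ (Finset.Icc 1 N).erase n, (x - chebNode N m) / (chebNode N n - chebNode N m)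

open Polynomial Polynomial.Chebyshev Lagrange

theorem Lagrange.eval_basis_eq_div_of_eq_C_mul_nodal {F ι : Type*} [Field F] [DecidableEq ι]
    {s : Finset ι} {v : ι → F} {i : ι} {x c : F} {p : F[X]} (hc : c ≠ 0)
    (hp : p = C c * nodal s v) (hi : i ∈ s) (hx : x ≠ v i) :
    (Lagrange.basis s v i).eval x = p.eval x / ((x - v i) * p.derivative.eval (v i)) := by
  rw [eval_basis_not_at_node hi hx, nodalWeight_eq_eval_derivative_nodal hi, hp,
    derivative_C_mul]
  simp only [eval_mul, eval_C]
  rw [mul_left_comm (x - v i), mul_div_mul_left _ _ hc, div_eq_mul_inv, mul_inv]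
  ring

theorem cot_half_add_sub_cot_half_sub {θ φ : ℝ} (h : cos θ ≠ cos φ) :
    cot ((θ + φ) / 2) - cot ((θ - φ) / 2) = 2 * sin φ / (cos θ - cos φ) := by
  have hcc : cos θ - cos φ = -2 * sin ((θ + φ) / 2) * sin ((θ - φ) / 2) := cos_sub_cos θ φ
  have hsub : cos θ - cos φ ≠ 0 := sub_ne_zero.mpr h
  have hplus : sin ((θ + φ) / 2) ≠ 0 := fun h0 => hsub (by rw [hcc, h0]; ring)
  have hminus : sin ((θ - φ) / 2) ≠ 0 := fun h0 => hsub (by rw [hcc, h0]; ring)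
  have hdiff : sin ((θ - φ) / 2 - (θ + φ) / 2) = -sin φ := by
    rw [show (θ - φ) / 2 - (θ + φ) / 2 = -φ by ring, sin_neg]
  rw [sin_sub] at hdiff
  rw [cot_eq_cos_div_sin, cot_eq_cos_div_sin, hcc]
  field_simp
  linear_combination hdiff

theorem sin_mul_sub_div_tan_add_sin_mul_add_div_tan {c θ φ : ℝ} (hφ : cos (c * φ) = 0) :
    sin (c * (θ - φ)) / tan ((θ - φ) / 2) + sin (c * (θ + φ)) / tan ((θ + φ) / 2) =
      cos (c * θ) * sin (c * φ) * (cot ((θ + φ) / 2) - cot ((θ - φ) / 2)) := by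
  rw [mul_sub c θ φ, mul_add c θ φ, sin_sub, sin_add, hφ, tan_eq_sin_div_cos, tan_eq_sin_div_cos,
    cot_eq_cos_div_sin, cot_eq_cos_div_sin, div_div_eq_mul_div, div_div_eq_mul_div]
  ring

theorem cos_mul_sin_div_eq_sin_div_tan_add {c θ φ : ℝ} (hφ : cos (c * φ) = 0)
    (hθ : cos θ ≠ cos φ) :
    cos (c * θ) * sin φ / (c * (cos θ - cos φ) * sin (c * φ)) =
      1 / (2 * c) * (sin (c * (θ - φ)) / tan ((θ - φ) / 2) +
        sin (c * (θ + φ)) / tan ((θ + φ) / 2)) := by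
  have hc : c ≠ 0 := by rintro rfl; simp at hφ
  have hsin_sq : sin (c * φ) ^ 2 = 1 := by
    linear_combination sin_sq_add_cos_sq (c * φ) - cos (c * φ) * hφ
  have hsin : sin (c * φ) ≠ 0 := by intro h; simp [h] at hsin_sq
  have hsub : cos θ - cos φ ≠ 0 := sub_ne_zero.mpr hθ
  rw [sin_mul_sub_div_tan_add_sin_mul_add_div_tan hφ, cot_half_add_sub_cot_half_sub hθ]
  field_simp
  linear_combination (-(cos (c * θ) * sin φ)) * hsin_sq

theorem eval_derivative_T_real_cos_mul_sin (n : ℤ) (φ : ℝ) :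
    (T ℝ n).derivative.eval (cos φ) * sin φ = n * sin (n * φ) := by
  have hU := U_real_cos φ (n - 1)
  rw [Int.cast_sub, Int.cast_one, sub_add_cancel] at hU
  rw [T_derivative_eq_U, eval_mul, mul_assoc, hU, eval_intCast]

noncomputable def chebAngle (N n : ℕ) : ℝ := (2 * (n : ℝ) - 1) * π / (2 * N)

theorem chebNode_eq_cos_chebAngle (N n : ℕ) : chebNode N n = cos (chebAngle N n) := rfl

theorem chebAngle_mem_Ioo {N n : ℕ} (hn : n ∈ Icc 1 N) : chebAngle N n ∈ Set.Ioo 0 π := by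
  obtain ⟨h1, h2⟩ := mem_Icc.mp hn
  have h1' : (1 : ℝ) ≤ n := by exact_mod_cast h1
  have h2' : (n : ℝ) ≤ N := by exact_mod_cast h2
  have hN : (0 : ℝ) < N := by linarith
  unfold chebAngle
  constructor
  · exact div_pos (by nlinarith [pi_pos]) (by positivity)
  · rw [div_lt_iff₀ (by positivity)]; nlinarith [pi_pos]

theorem cos_mul_chebAngle {N : ℕ} (hN : N ≠ 0) (n : ℕ) : cos (N * chebAngle N n) = 0 := by
  rw [cos_eq_zero_iff]
  refine ⟨(n : ℤ) - 1, ?_⟩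
  unfold chebAngle
  push_cast
  field_simp
  ring

theorem injOn_chebNode (N : ℕ) : Set.InjOn (chebNode N) (Icc 1 N) := by
  intro m hm n hn h
  have hangle := injOn_cos (Set.Ioo_subset_Icc_self (chebAngle_mem_Ioo hm))
    (Set.Ioo_subset_Icc_self (chebAngle_mem_Ioo hn)) h
  have hN : (N : ℝ) ≠ 0 := by
    have : 1 ≤ N := (mem_Icc.mp hm).1.trans (mem_Icc.mp hm).2
    positivity
  unfold chebAngle at hangle
  field_simp at hangle
  exact_mod_cast (by linarith [hangle] : (m : ℝ) = n)

theorem image_chebNode_Icc (N : ℕ) :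
    (Icc 1 N).image (chebNode N) =
      (range N).image (fun k : ℕ => cos ((2 * k + 1) * π / (2 * N))) := by
  have hIcc : Icc 1 N = (range N).image (· + 1) := by
    rw [← Nat.Ico_zero_eq_range, image_add_right_Ico, Ico_add_one_right_eq_Icc, zero_add]
  rw [hIcc, image_image]
  congr 1
  funext k
  simp only [Function.comp, chebNode]
  push_cast
  ring_nf

theorem T_real_eq_C_mul_nodal_chebNode (N : ℕ) :
    T ℝ N = C (2 ^ (N - 1)) * nodal (Icc 1 N) (chebNode N) := by
  have hroots : (T ℝ N).roots = ((Icc 1 N).image (chebNode N)).val := by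
    rw [roots_T_real, image_chebNode_Icc]
  have hcard : Multiset.card (T ℝ N).roots = (T ℝ N).natDegree := by
    rw [hroots, ← card_def, card_image_of_injOn (injOn_chebNode N)]
    simp
  conv_lhs => rw [← C_leadingCoeff_mul_prod_multiset_X_sub_C hcard, hroots]
  rw [← prod_eq_multiset_prod, prod_image (injOn_chebNode N), leadingCoeff_T]
  simp [nodal]

theorem chebLagrange_eq_eval_basis (N n : ℕ) (x : ℝ) :
    chebLagrange N n x = (Lagrange.basis (Icc 1 N) (chebNode N) n).eval x := by
  simp [chebLagrange, Lagrange.basis, basisDivisor, eval_prod, div_eq_inv_mul]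

theorem chebLagrange_cos {N n : ℕ} (hn : n ∈ Icc 1 N) {θ : ℝ} (hθ : cos θ ≠ chebNode N n) :
    chebLagrange N n (cos θ) = cos (N * θ) * sin (chebAngle N n) /
      (N * (cos θ - cos (chebAngle N n)) * sin (N * chebAngle N n)) := by
  have hsin : sin (chebAngle N n) ≠ 0 :=
    (sin_pos_of_pos_of_lt_pi (chebAngle_mem_Ioo hn).1 (chebAngle_mem_Ioo hn).2).ne'
  have hderiv : (T ℝ N).derivative.eval (chebNode N n) =
      N * sin (N * chebAngle N n) / sin (chebAngle N n) := by
    rw [eq_div_iff hsin]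
    exact_mod_cast eval_derivative_T_real_cos_mul_sin N (chebAngle N n)
  rw [chebLagrange_eq_eval_basis, eval_basis_eq_div_of_eq_C_mul_nodal (by positivity)
    (T_real_eq_C_mul_nodal_chebNode N) hn hθ, hderiv, T_real_cos, Int.cast_natCast,
    chebNode_eq_cos_chebAngle]
  field_simp

theorem chebLagrange_closed_form_general (N : ℕ) (n : ℕ) (hn : n ∈ Finset.Icc 1 N)
    (θ : ℝ)
    (hx : ∀ m ∈ Finset.Icc 1 N, Real.cos θ ≠ chebNode N m) :
    chebLagrange N n (Real.cos θ) =
      (1 / (2 * N)) *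
        (Real.sin (N * (θ - (2 * (n : ℝ) - 1) * Real.pi / (2 * N))) /
            Real.tan ((θ - (2 * (n : ℝ) - 1) * Real.pi / (2 * N)) / 2) +
          Real.sin (N * (θ + (2 * (n : ℝ) - 1) * Real.pi / (2 * N))) /
            Real.tan ((θ + (2 * (n : ℝ) - 1) * Real.pi / (2 * N)) / 2)) := by
  have hN : N ≠ 0 := by have := mem_Icc.mp hn; omega
  rw [chebLagrange_cos hn (hx n hn)]
  exact cos_mul_sin_div_eq_sin_div_tan_add (cos_mul_chebAngle hN n) (hx n hn)

theorem chebLagrange_closed_form (N : ℕ) (hN : 1 ≤ N) (n : ℕ) (hn : n ∈ Finset.Icc 1 N)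
    (θ : ℝ) (hθ : θ ∈ Set.Ioo 0 Real.pi)
    (hx : ∀ m ∈ Finset.Icc 1 N, Real.cos θ ≠ chebNode N m) :
    chebLagrange N n (Real.cos θ) =
      (1 / (2 * N)) *
        (Real.sin (N * (θ - (2 * (n : ℝ) - 1) * Real.pi / (2 * N))) /
            Real.tan ((θ - (2 * (n : ℝ) - 1) * Real.pi / (2 * N)) / 2) +
          Real.sin (N * (θ + (2 * (n : ℝ) - 1) * Real.pi / (2 * N))) /
            Real.tan ((θ + (2 * (n : ℝ) - 1) * Real.pi / (2 * N)) / 2)) :=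
  chebLagrange_closed_form_general N n hn θ hx
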